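/- arXiv:1506.01091 — 5 statements merged into one kernel-verified Lean document; each statement's English description precedes it below -/
import Mathlib

section
/- Every down-split sequence s = (s_2, ..., s_n) satisfies s_n = 2n - 3. -/
/-!
Only the second block of the split matters: the last entry of `s` is the last entry of
`(s_{k+1} - (2k-2), …, s_n - (2k-2))` shifted back by `2k - 2`, and that block has `n - k`
entries, so by induction `s_n = (2(n - k + 1) - 3) + (2k - 2) = 2n - 3`.
-/

/-- Down-split sequences.  A sequence `(s_2, …, s_n)` is encoded as the list
`l = [s_2, …, s_n]` of length `n - 1`, so that `s_k = l.get? (k - 2)`.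
The sequence `(1)` (i.e. `n = 2`) is down-split; a sequence with `n > 2` is
down-split if it is an increasing sequence of positive integers, the set
`{2 ≤ k < n : s_k = 2k - 2}` is nonempty and, with `k` its infimum, both
`(s_2 - 1, …, s_k - 1)` and `(s_{k+1} - (2k-2), …, s_n - (2k-2))` are
down-split. -/
inductive IsDownSplit : List ℕ → Prop
  | base : IsDownSplit [1]
  | split (l : List ℕ) (k : ℕ)
      (hmono : l.Chain' (· < ·)) (hpos : ∀ x ∈ l, 0 < x)
      (hn : 2 < l.length + 1)
      (hk2 : 2 ≤ k) (hkn : k < l.length + 1)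
      (hsk : l[k - 2]? = some (2 * k - 2))
      (hmin : ∀ j, 2 ≤ j → j < k → l[j - 2]? ≠ some (2 * j - 2))
      (h1 : IsDownSplit ((l.take (k - 1)).map (· - 1)))
      (h2 : IsDownSplit ((l.drop (k - 1)).map (· - (2 * k - 2)))) :
      IsDownSplit l

theorem IsDownSplit.getLast?_eq {l : List ℕ} (h : IsDownSplit l) :
    l.getLast? = some (2 * l.length - 1) := by
  induction h with
  | base => rfl
  | split l k _ _ _ _ hkn _ _ _ _ _ ih =>
    have hdrop : ¬ l.length ≤ k - 1 := by omega
    rw [List.getLast?_map, List.getLast?_drop, if_neg hdrop, List.length_map,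
      List.length_drop] at ih
    obtain ⟨x, hx, hxk⟩ := Option.map_eq_some_iff.mp ih
    rw [hx]
    congr 1
    omega

/-- Every down-split sequence `s = (s_2, …, s_n)` satisfies
`s_n = 2n - 3`.  (Here `n = l.length + 1`.) -/
theorem statement2 (l : List ℕ) (h : IsDownSplit l) (hne : l ≠ []) :
    l.getLast hne = 2 * (l.length + 1) - 3 := by
  have hlast := h.getLast?_eq
  rw [List.getLast?_eq_some_getLast hne, Option.some_inj] at hlast
  rw [hlast]
  omega
end

section
/- Every up-split sequence s = (s_1, ..., s_n) satisfies s_n = 2n - 2. -/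
/-- Up-split sequences.  A sequence `(s_1, …, s_n)` is encoded as the list
`l = [s_1, …, s_n]` of length `n`, so that `s_k = l.get? (k - 1)`.
The sequence `(0)` is up-split; a sequence with `n > 1` is up-split if it is an
increasing sequence of nonnegative integers, the set `{1 ≤ k < n : s_k = 2k - 2}`
is nonempty and, with `k` its supremum, `(s_1, …, s_k)` is up-split and
`(s_{k+1} - (2k-1), …, s_n - (2k-1))` is down-split. -/
inductive IsUpSplit : List ℕ → Prop
  | base : IsUpSplit [0]
  | split (l : List ℕ) (k : ℕ)
      (hmono : l.Chain' (· < ·))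
      (hn : 1 < l.length)
      (hk1 : 1 ≤ k) (hkn : k < l.length)
      (hsk : l[k - 1]? = some (2 * k - 2))
      (hmax : ∀ j, k < j → j < l.length → l[j - 1]? ≠ some (2 * j - 2))
      (h1 : IsUpSplit (l.take k))
      (h2 : IsDownSplit ((l.drop k).map (· - (2 * k - 1)))) :
      IsUpSplit l

/-! Only the last piece of each splitting matters: following it down, a down-split sequence
`(s_2, …, s_n)` ends with `s_n = 2n - 3`, and the last piece of an up-split sequence, shifted
back by `2k - 1`, then ends at `2(n - k) - 1 + (2k - 1) = 2n - 2`. -/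

theorem IsDownSplit.getLast_eq {l : List ℕ} (h : IsDownSplit l) (hne : l ≠ []) :
    l.getLast hne = 2 * l.length - 1 := by
  induction h with
  | base => rfl
  | split l k _ _ _ _ hkn _ _ _ _ _ ih =>
    have hsuffix := ih (by simp; omega)
    simp only [List.getLast_map, List.getLast_drop, List.length_map, List.length_drop]
      at hsuffix
    omega

/-- Every up-split sequence `s = (s_1, …, s_n)` satisfies
`s_n = 2n - 2`.  (Here `n = l.length`.) -/
theorem statement3 (l : List ℕ) (h : IsUpSplit l) (hne : l ≠ []) :
    l.getLast hne = 2 * l.length - 2 := by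
  cases h with
  | base => rfl
  | split _ k _ _ _ hkn _ _ _ hdown =>
    have hsuffix := hdown.getLast_eq (by simpa using hkn)
    simp only [List.getLast_map, List.getLast_drop, List.length_map, List.length_drop]
      at hsuffix
    omega
end

section
/- Let T be an edge-weighted tree, a a vertex of T, r_T the path-length metric on T, and c a constant with c ≥ max{r_T(a,i) : i a leaf of T}. Define r̃(i,j) = c + (1/2)(r_T(i,j) - r_T(a,i) - r_T(a,j)) for distinct leaves i, j, and r̃(i,i) = 0. Then r̃ is an ultrametric on the leaf set of T, i.e., r̃(i,k) ≤ max(r̃(i,j), r̃(j,k)) for all leaves i, j, k. -/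
/-!
Writing `d` for the path-length metric, the transform is `r̃ i j = c - (i|j)ₐ` with the Gromov
product `(i|j)ₐ = (d a i + d a j - d i j) / 2`, so the ultrametric inequality for `r̃` is the
four-point condition `d i k + d a j ≤ max (d i j + d a k) (d j k + d a i)`.

In a tree the four-point condition comes from medians: walking from `a` (resp. `j`) towards the
path `p` from `i` to `k`, let `x` (resp. `y`) be the first vertex on `p`. Then `x` and `y` lie on
`p` in some order, and in either order the corresponding side of the inequality is computed
exactly by adding up lengths of subpaths of `p` and of the two access paths.
-/

namespace SimpleGraph

variable {V : Type*} {G : SimpleGraph V}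

def IsPathLength (G : SimpleGraph V) (w : Sym2 V → ℝ) (d : V → V → ℝ) : Prop :=
  ∀ (u v : V) (p : G.Walk u v), p.IsPath → d u v = (p.edges.map w).sum

namespace Walk

lemma isPath_append_of_support_inter {u v x : V} {p : G.Walk u x} {q : G.Walk x v}
    (hp : p.IsPath) (hq : q.IsPath) (hsep : ∀ z ∈ p.support, z ∈ q.support → z = x) :
    (p.append q).IsPath := by
  rw [isPath_def, support_append, List.nodup_append]
  refine ⟨hp.support_nodup, hq.support_nodup.tail, ?_⟩
  rintro z hzp _ hzq rfl
  have hnd := hq.support_nodup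
  rw [← q.cons_tail_support] at hnd
  obtain rfl := hsep z hzp (q.cons_tail_support ▸ List.mem_cons_of_mem _ hzq)
  exact (List.nodup_cons.mp hnd).1 hzq

lemma exists_append_first_mem (S : Set V) {b u : V} (r : G.Walk b u) (hu : u ∈ S) :
    ∃ (x : V) (q₁ : G.Walk b x) (q₂ : G.Walk x u),
      r = q₁.append q₂ ∧ x ∈ S ∧ ∀ z ∈ q₁.support, z ∈ S → z = x := by
  induction r with
  | nil => exact ⟨_, .nil, .nil, rfl, hu, by simp⟩
  | @cons b v _ h r' ih =>
    by_cases hb : b ∈ S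
    · exact ⟨b, .nil, .cons h r', rfl, hb, by simp⟩
    obtain ⟨x, q₁, q₂, rfl, hx, hfirst⟩ := ih hu
    refine ⟨x, .cons h q₁, q₂, rfl, hx, ?_⟩
    rintro z hz hzS
    rcases List.mem_cons.mp (by simpa using hz) with rfl | hz
    · exact absurd hzS hb
    · exact hfirst z hz hzS

end Walk

namespace IsPathLength

variable {w : Sym2 V → ℝ} {d : V → V → ℝ} (hd : G.IsPathLength w d)
include hd

lemma eq_add_of_append {u v x : V} {p : G.Walk u x} {q : G.Walk x v}
    (hp : p.IsPath) (hq : q.IsPath) (hpq : (p.append q).IsPath) :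
    d u v = d u x + d x v := by
  rw [hd _ _ _ hpq, hd _ _ _ hp, hd _ _ _ hq, Walk.edges_append, List.map_append,
    List.sum_append]

lemma eq_add_of_mem_support {u v x : V} {p : G.Walk u v} (hp : p.IsPath)
    (hx : x ∈ p.support) : d u v = d u x + d x v := by
  classical
  have hpq : ((p.takeUntil x hx).append (p.dropUntil x hx)).IsPath := by rwa [p.take_spec hx]
  exact hd.eq_add_of_append hpq.of_append_left hpq.of_append_right hpq

lemma eq_add_or_eq_add_of_mem_support {u v x y : V} {p : G.Walk u v} (hp : p.IsPath)
    (hx : x ∈ p.support) (hy : y ∈ p.support) :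
    d u y = d u x + d x y ∨ d u x = d u y + d y x := by
  classical
  have hy' : y ∈ (p.takeUntil x hx).support ∨ y ∈ (p.dropUntil x hx).support := by
    rw [← Walk.mem_support_append_iff, p.take_spec hx]
    exact hy
  rcases hy' with hy' | hy'
  · exact Or.inr (hd.eq_add_of_mem_support (hp.takeUntil hx) hy')
  · have hxyv := hd.eq_add_of_mem_support (hp.dropUntil hx) hy'
    have huxv := hd.eq_add_of_mem_support hp hx
    have huyv := hd.eq_add_of_mem_support hp hy
    exact Or.inl (by linarith)

variable (hG : G.Preconnected)
include hG

lemma symm (u v : V) : d u v = d v u := by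
  obtain ⟨p, hp⟩ := hG.exists_isPath u v
  rw [hd u v p hp, hd v u p.reverse hp.reverse, Walk.edges_reverse, List.map_reverse,
    List.sum_reverse]

variable (hw : ∀ e ∈ G.edgeSet, 0 ≤ w e)
include hw

lemma nonneg (u v : V) : 0 ≤ d u v := by
  obtain ⟨p, hp⟩ := hG.exists_isPath u v
  rw [hd u v p hp]
  refine List.sum_nonneg fun t ht => ?_
  obtain ⟨e, he, rfl⟩ := List.mem_map.mp ht
  exact hw e (p.edges_subset_edgeSet he)

lemma le_add (u x v : V) : d u v ≤ d u x + d x v := by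
  classical
  obtain ⟨p, hp⟩ := hG.exists_isPath u x
  obtain ⟨q, hq⟩ := hG.exists_isPath x v
  rw [hd u v _ (p.append q).bypass_isPath, hd u x p hp, hd x v q hq, ← List.sum_append,
    ← List.map_append, ← Walk.edges_append]
  refine ((p.append q).edges_bypass_sublist_edges.map w).sum_le_sum fun t ht => ?_
  obtain ⟨e, he, rfl⟩ := List.mem_map.mp ht
  exact hw e ((p.append q).edges_subset_edgeSet he)

omit hw in
lemma exists_median {u v : V} {p : G.Walk u v} (hp : p.IsPath) (b : V) :
    ∃ x ∈ p.support, d b u = d b x + d x u ∧ d b v = d b x + d x v := by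
  classical
  obtain ⟨r, hr⟩ := hG.exists_isPath b u
  obtain ⟨x, q₁, q₂, rfl, hx, hfirst⟩ :=
    Walk.exists_append_first_mem {z | z ∈ p.support} r p.start_mem_support
  have hxv : (q₁.append (p.dropUntil x hx)).IsPath :=
    Walk.isPath_append_of_support_inter hr.of_append_left (hp.dropUntil hx)
      fun z hz hz' => hfirst z hz (p.support_dropUntil_subset_support hx hz')
  exact ⟨x, hx, hd.eq_add_of_append hr.of_append_left hr.of_append_right hr,
    hd.eq_add_of_append hr.of_append_left (hp.dropUntil hx) hxv⟩

lemma four_point (a i j k : V) : d i k + d a j ≤ max (d i j + d a k) (d j k + d a i) := by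
  obtain ⟨p, hp⟩ := hG.exists_isPath i k
  obtain ⟨x, hx, hai, hak⟩ := hd.exists_median hG hp a
  obtain ⟨y, hy, hji, hjk⟩ := hd.exists_median hG hp j
  have hikx := hd.eq_add_of_mem_support hp hx
  have hiky := hd.eq_add_of_mem_support hp hy
  have haj := hd.le_add hG hw a x j
  have hxj := hd.le_add hG hw x y j
  have := hd.symm hG i j
  have := hd.symm hG y i
  have := hd.symm hG y j
  have := hd.symm hG x y
  have := hd.symm hG x i
  rcases hd.eq_add_or_eq_add_of_mem_support hp hx hy with h | h
  · exact le_max_of_le_left (by linarith)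
  · exact le_max_of_le_right (by linarith)

end IsPathLength

end SimpleGraph

lemma farris_le_max_of_four_point {α : Type*} {d : α → α → ℝ} {a : α} {c : ℝ} {S : Set α}
    {r : α → α → ℝ} (hnonneg : ∀ i j, 0 ≤ d i j)
    (hfour : ∀ i j k, d i k + d a j ≤ max (d i j + d a k) (d j k + d a i))
    (hc : ∀ i ∈ S, d a i ≤ c) (hr : ∀ i j, i ≠ j → r i j = c + (d i j - d a i - d a j) / 2)
    (hrdiag : ∀ i, r i i = 0) :
    ∀ i ∈ S, ∀ j ∈ S, ∀ k ∈ S, r i k ≤ max (r i j) (r j k) := by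
  intro i hi j hj k hk
  by_cases hij : i = j
  · subst hij
    by_cases hik : i = k
    · subst hik; simp [hrdiag]
    · exact le_max_right _ _
  by_cases hjk : j = k
  · subst hjk; exact le_max_left _ _
  by_cases hik : i = k
  · subst hik
    have := hnonneg i j
    have := hc i hi
    have := hc j hj
    rw [hrdiag, hr i j hij]
    exact le_max_of_le_left (by linarith)
  rw [hr i k hik, hr i j hij, hr j k hjk, le_max_iff]
  rcases le_max_iff.mp (hfour i j k) with h | h
  · left; linarith
  · right; linarith

theorem statement5_general {V : Type*} (G : SimpleGraph V) (hT : G.IsTree)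
    (w : Sym2 V → ℝ) (hw : ∀ e ∈ G.edgeSet, 0 < w e)
    (d : V → V → ℝ)
    (hd : ∀ (u v : V) (p : G.Walk u v), p.IsPath → d u v = (p.edges.map w).sum)
    (leaves : Set V)
    (a : V) (c : ℝ) (hc : ∀ i ∈ leaves, d a i ≤ c)
    (r : V → V → ℝ)
    (hr : ∀ i j, i ≠ j → r i j = c + (d i j - d a i - d a j) / 2)
    (hrdiag : ∀ i, r i i = 0) :
    ∀ i ∈ leaves, ∀ j ∈ leaves, ∀ k ∈ leaves, r i k ≤ max (r i j) (r j k) := by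
  have hd : G.IsPathLength w d := hd
  have hG := hT.connected.preconnected
  have hw' : ∀ e ∈ G.edgeSet, 0 ≤ w e := fun e he => (hw e he).le
  exact farris_le_max_of_four_point (hd.nonneg hG hw') (hd.four_point hG hw' a) hc hr hrdiag

/-- Let `T` be an edge-weighted tree (a finite tree `G` with positive
weights `w` on its edges), let `r_T = d` be the path-length metric (for any path `p`
between `u` and `v`, `d u v` is the sum of the weights of the edges of `p`; in a tree
paths are unique), let `a` be a vertex and `c ≥ max {d a i : i a leaf}`.  Define the
Farris transform `r̃ i j = c + (d i j - d a i - d a j)/2` for distinct leaves `i ≠ j`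
and `r̃ i i = 0`.  Then `r̃` is an ultrametric on the leaf set:
`r̃ i k ≤ max (r̃ i j) (r̃ j k)` for all leaves `i, j, k`. -/
theorem statement5 {V : Type*} [Fintype V] (G : SimpleGraph V) (hT : G.IsTree)
    (w : Sym2 V → ℝ) (hw : ∀ e ∈ G.edgeSet, 0 < w e)
    (d : V → V → ℝ)
    (hd : ∀ (u v : V) (p : G.Walk u v), p.IsPath → d u v = (p.edges.map w).sum)
    (leaves : Set V) (hleaves : leaves = {v : V | (G.neighborSet v).ncard = 1})
    (a : V) (c : ℝ) (hc : ∀ i ∈ leaves, d a i ≤ c)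
    (r : V → V → ℝ)
    (hr : ∀ i j, i ≠ j → r i j = c + (d i j - d a i - d a j) / 2)
    (hrdiag : ∀ i, r i i = 0) :
    ∀ i ∈ leaves, ∀ j ∈ leaves, ∀ k ∈ leaves, r i k ≤ max (r i j) (r j k) :=
  statement5_general G hT w hw d hd leaves a c hc r hr hrdiag
end

section
/- Let n_0, ..., n_ℓ and n_0', ..., n_ℓ' be nonnegative integers and define the polynomials (Fourier transforms) g(z) = Σ_{k=0}^{ℓ} n_k e^{izk} and g'(z) = Σ_{k=0}^{ℓ} n_k' e^{izk}. Suppose (i) g(z)g(-z) = g'(z)g'(-z) for all z ∈ ℂ, and (ii) g(z) + e^{izℓ} g(-z) = g'(z) + e^{izℓ} g'(-z) for all z ∈ ℂ, and (iii) there exist finitely supported integer-valued functions C, D on ℤ with φ(z) = Σ_k C(k)e^{izk}, ψ(z) = Σ_k D(k)e^{izk} satisfying g = φψ and g'(z) = φ(z)ψ(-z). Then either n_r = n_r' for all 0 ≤ r ≤ ℓ, or n_r = n'_{ℓ-r} for all 0 ≤ r ≤ ℓ. -/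
/-!
Substituting the factorizations `g = φψ` and `g'(z) = φ(z)ψ(-z)` into condition (ii) turns it
into `(φ(z) - e^{izℓ}φ(-z))(ψ(z) - ψ(-z)) = 0`. Both factors are entire, so one of them vanishes
identically. If `ψ` is even then `g' = g`; otherwise `φ(z) = e^{izℓ}φ(-z)` and
`g'(z) = e^{izℓ}g(-z)`, the reflected polynomial. Coefficients are read off because `z ↦ e^{iz}`
covers `ℂ \ {0}`, where a polynomial is determined by its values.
-/

section

open Complex

theorem differentiable_finsuppSum_exp (C : ℤ →₀ ℤ) :
    Differentiable ℂ fun z => C.sum fun k c => (c : ℂ) * exp (I * z * k) := by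
  unfold Finsupp.sum
  fun_prop

theorem Differentiable.eq_zero_or_eq_zero_of_mul_eq_zero {f g : ℂ → ℂ}
    (hf : Differentiable ℂ f) (hg : Differentiable ℂ g) (hfg : ∀ z, f z * g z = 0) :
    f = 0 ∨ g = 0 := by
  have := AnalyticOnNhd.eq_zero_or_eq_zero_of_mul_eq_zero (U := Set.univ)
    (analyticOnNhd_univ_iff_differentiable.mpr hf) (analyticOnNhd_univ_iff_differentiable.mpr hg)
    (fun z _ => hfg z) isPreconnected_univ
  simpa [funext_iff] using this

theorem exp_I_mul_natCast (z : ℂ) (k : ℕ) : exp (I * z * k) = exp (I * z) ^ k := by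
  rw [mul_comm, exp_nat_mul]

theorem eq_of_sum_exp_eq {m : ℕ} {c c' : ℕ → ℂ}
    (h : ∀ z, ∑ k ∈ Finset.range m, c k * exp (I * z * k)
      = ∑ k ∈ Finset.range m, c' k * exp (I * z * k)) :
    ∀ r < m, c r = c' r := by
  let p : (ℕ → ℂ) → Polynomial ℂ := fun c =>
    ∑ k ∈ Finset.range m, Polynomial.C (c k) * Polynomial.X ^ k
  have hp : p c = p c' := by
    refine Polynomial.eq_of_infinite_eval_eq _ _ ((Set.finite_singleton 0).infinite_compl.mono ?_)
    intro w (hw : w ≠ 0)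
    obtain ⟨z, rfl⟩ : ∃ z, exp (I * z) = w := ⟨-I * log w, by rw [← mul_assoc]; simp [exp_log hw]⟩
    simpa [p, Polynomial.eval_finsetSum, exp_I_mul_natCast] using h z
  intro r hr
  simpa [p, Polynomial.finsetSum_coeff, Polynomial.coeff_C_mul, Polynomial.coeff_X_pow, hr] using
    congrArg (Polynomial.coeff · r) hp

theorem exp_mul_sum_exp_neg_eq_sum_reflect (ℓ : ℕ) (c : ℕ → ℂ) (z : ℂ) :
    exp (I * z * ℓ) * ∑ k ∈ Finset.range (ℓ + 1), c k * exp (I * -z * k)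
      = ∑ k ∈ Finset.range (ℓ + 1), c (ℓ - k) * exp (I * z * k) := by
  rw [← Finset.sum_range_reflect, Finset.mul_sum]
  refine Finset.sum_congr rfl fun k hk => ?_
  have hk : k ≤ ℓ := Nat.lt_succ_iff.mp (Finset.mem_range.mp hk)
  rw [Nat.add_sub_cancel, mul_left_comm, ← exp_add]
  congr 2
  push_cast [Nat.cast_sub hk]
  ring

end

open Complex in
theorem statement10_general (ℓ : ℕ) (n n' : ℕ → ℕ)
    (g g' : ℂ → ℂ)
    (hg : ∀ z, g z = ∑ k ∈ Finset.range (ℓ + 1), (n k : ℂ) * Complex.exp (I * z * k))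
    (hg' : ∀ z, g' z = ∑ k ∈ Finset.range (ℓ + 1), (n' k : ℂ) * Complex.exp (I * z * k))
    (hrefl : ∀ z : ℂ, g z + Complex.exp (I * z * ℓ) * g (-z)
        = g' z + Complex.exp (I * z * ℓ) * g' (-z))
    (C D : ℤ →₀ ℤ) (φ ψ : ℂ → ℂ)
    (hφ : ∀ z, φ z = C.sum fun k c => (c : ℂ) * Complex.exp (I * z * k))
    (hψ : ∀ z, ψ z = D.sum fun k c => (c : ℂ) * Complex.exp (I * z * k))
    (hfac : ∀ z, g z = φ z * ψ z)
    (hfac' : ∀ z, g' z = φ z * ψ (-z)) :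
    (∀ r ≤ ℓ, n r = n' r) ∨ (∀ r ≤ ℓ, n r = n' (ℓ - r)) := by
  have key : ∀ z, (φ z - exp (I * z * ℓ) * φ (-z)) * (ψ z - ψ (-z)) = 0 := fun z => by
    have h := hrefl z
    rw [hfac z, hfac (-z), hfac' z, hfac' (-z), neg_neg] at h
    linear_combination h
  have hφd : Differentiable ℂ φ := funext hφ ▸ differentiable_finsuppSum_exp C
  have hψd : Differentiable ℂ ψ := funext hψ ▸ differentiable_finsuppSum_exp D
  rcases Differentiable.eq_zero_or_eq_zero_of_mul_eq_zero (by fun_prop) (by fun_prop) key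
    with hφsym | hψeven
  · right
    have hg'g : ∀ z, g' z = exp (I * z * ℓ) * g (-z) := fun z => by
      rw [hfac', hfac, sub_eq_zero.mp (congrFun hφsym z)]; ring
    have hcoeff : ∀ k < ℓ + 1, (n' k : ℂ) = n (ℓ - k) := eq_of_sum_exp_eq fun z => by
      rw [← hg', hg'g, hg, exp_mul_sum_exp_neg_eq_sum_reflect]
    intro r hr
    simpa [Nat.sub_sub_self hr] using (hcoeff (ℓ - r) (by omega)).symm
  · left
    have hcoeff : ∀ k < ℓ + 1, (n k : ℂ) = n' k := eq_of_sum_exp_eq fun z => by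
      rw [← hg, ← hg', hfac, hfac', sub_eq_zero.mp (congrFun hψeven z)]
    exact fun r hr => by exact_mod_cast hcoeff r (by omega)

open Complex in
/-- Let `n_0, …, n_ℓ` and `n'_0, …, n'_ℓ` be nonnegative integers with
Fourier transforms `g z = Σ_{k=0}^{ℓ} n_k e^{izk}` and `g' z = Σ_{k=0}^{ℓ} n'_k e^{izk}`.
Suppose (i) `g(z)g(-z) = g'(z)g'(-z)` for all `z ∈ ℂ`, (ii)
`g(z) + e^{izℓ} g(-z) = g'(z) + e^{izℓ} g'(-z)` for all `z ∈ ℂ`, and (iii) there exist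
finitely supported integer-valued functions `C, D` on `ℤ`, with associated trigonometric
polynomials `φ z = Σ_k C(k)e^{izk}` and `ψ z = Σ_k D(k)e^{izk}`, such that `g = φψ` and
`g'(z) = φ(z)ψ(-z)`.  Then either `n_r = n'_r` for all `0 ≤ r ≤ ℓ`, or
`n_r = n'_{ℓ-r}` for all `0 ≤ r ≤ ℓ`. -/
theorem statement10 (ℓ : ℕ) (n n' : ℕ → ℕ)
    (g g' : ℂ → ℂ)
    (hg : ∀ z, g z = ∑ k ∈ Finset.range (ℓ + 1), (n k : ℂ) * Complex.exp (I * z * k))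
    (hg' : ∀ z, g' z = ∑ k ∈ Finset.range (ℓ + 1), (n' k : ℂ) * Complex.exp (I * z * k))
    (hauto : ∀ z : ℂ, g z * g (-z) = g' z * g' (-z))
    (hrefl : ∀ z : ℂ, g z + Complex.exp (I * z * ℓ) * g (-z)
        = g' z + Complex.exp (I * z * ℓ) * g' (-z))
    (C D : ℤ →₀ ℤ) (φ ψ : ℂ → ℂ)
    (hφ : ∀ z, φ z = C.sum fun k c => (c : ℂ) * Complex.exp (I * z * k))
    (hψ : ∀ z, ψ z = D.sum fun k c => (c : ℂ) * Complex.exp (I * z * k))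
    (hfac : ∀ z, g z = φ z * ψ z)
    (hfac' : ∀ z, g' z = φ z * ψ (-z)) :
    (∀ r ≤ ℓ, n r = n' r) ∨ (∀ r ≤ ℓ, n r = n' (ℓ - r)) :=
  statement10_general ℓ n n' g g' hg hg' hrefl C D φ ψ hφ hψ hfac hfac'
end

section
/- Let ℓ ≥ 1 and p_1, ..., p_ℓ be the normalized elementary symmetric means of positive reals n_1, ..., n_ℓ, i.e., p_j = e_j(n_1,...,n_ℓ)/binom(ℓ,j). If α_1,...,α_ℓ and β_1,...,β_ℓ are positive reals with Σ_j j·α_j = Σ_j j·β_j and Σ_{i=j}^{ℓ} (i-j+1)·α_i ≥ Σ_{i=j}^{ℓ} (i-j+1)·β_i for all 2 ≤ j ≤ ℓ, then Π_{j=1}^{ℓ} p_j^{α_j} ≤ Π_{j=1}^{ℓ} p_j^{β_j}. -/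
/-!
Newton's inequalities `E j * E (j + 2) ≤ E (j + 1) ^ 2` for the normalized elementary symmetric
means `E` are proved by induction on the number of variables: adjoining `t` to `n` numbers gives
`(n + 1) E' k = (n + 1 - k) E k + k t E (k - 1)`, and the inequality for the new means reduces to a
sum-of-squares identity. So `q = log E` is concave on `0, …, ℓ` with `q 0 = 0`. Summing by parts
twice, `∑ j, (α j - β j) q j = ∑ k, W k * Δ²q k` with `W k = ∑_{i ≥ k} (i - k + 1) (α i - β i)`;
here `W 1 = 0`, `W k ≥ 0` for `k ≥ 2` and `Δ²q ≤ 0`.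
-/

open Finset Real

section NewtonStep

variable {R : Type*} [Field R] [LinearOrder R] [IsStrictOrderedRing R]

/-- With `a, b, c, d` the means `E (j - 1), …, E (j + 2)` of `n` numbers, `i = j` and
`l = n - j - 1`, the three factors are `n + 1` times the means `E' j, E' (j + 2), E' (j + 1)` after
adjoining `t`. The proof is the identity
`RHS - LHS = l(l+2)(c²-bd) + i(i+2)t²(b²-ac) + ilt(bc-ad) + (c-tb)²`. -/
theorem newton_inequality_step {a b c d t i l : R} (hb : 0 < b) (hc : 0 < c) (hd : 0 ≤ d)
    (ht : 0 ≤ t) (hi : 0 ≤ i) (hl : 0 ≤ l) (hac : 0 < i → a * c ≤ b ^ 2) (hbd : b * d ≤ c ^ 2) :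
    ((l + 2) * b + i * t * a) * (l * d + (i + 2) * t * c) ≤
      ((l + 1) * c + (i + 1) * t * b) ^ 2 := by
  have hcd : 0 ≤ l * (l + 2) * (c ^ 2 - b * d) := by
    have := sub_nonneg.2 hbd; positivity
  rcases hi.eq_or_lt with rfl | hi
  · nlinarith [sq_nonneg (c - t * b)]
  have hab := sub_nonneg.2 (hac hi)
  have had : 0 ≤ b * c - a * d := by
    refine sub_nonneg.2 (le_of_mul_le_mul_right ?_ (mul_pos hb hc))
    nlinarith [mul_le_mul (hac hi) hbd (by positivity) (by positivity)]
  have hi2 : 0 ≤ i * (i + 2) := by positivity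
  nlinarith [sq_nonneg (c - t * b), mul_nonneg (mul_nonneg hi2 (sq_nonneg t)) hab,
    mul_nonneg (mul_nonneg (mul_nonneg hi.le hl) ht) had]

end NewtonStep

namespace Multiset

section CommSemiring

variable {R : Type*} [CommSemiring R]

theorem esymm_cons_succ (a : R) (s : Multiset R) (k : ℕ) :
    (a ::ₘ s).esymm (k + 1) = s.esymm (k + 1) + a * s.esymm k := by
  simp only [esymm, powersetCard_cons, map_add, sum_add, map_map, Function.comp_def, prod_cons,
    sum_map_mul_left]

theorem esymm_eq_zero_of_card_lt {s : Multiset R} {k : ℕ} (h : card s < k) : s.esymm k = 0 := by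
  simp [esymm, powersetCard_eq_empty k h]

end CommSemiring

section OrderedSemiring

variable {R : Type*} [CommSemiring R] [PartialOrder R] [IsStrictOrderedRing R]

theorem esymm_nonneg {s : Multiset R} (hs : ∀ x ∈ s, 0 ≤ x) (k : ℕ) : 0 ≤ s.esymm k :=
  sum_nonneg fun _ hu ↦ by
    obtain ⟨t, ht, rfl⟩ := mem_map.1 hu
    exact prod_nonneg fun x hx ↦ hs x (mem_of_le (mem_powersetCard.1 ht).1 hx)

theorem esymm_pos {s : Multiset R} (hs : ∀ x ∈ s, 0 < x) {k : ℕ} (hk : k ≤ card s) :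
    0 < s.esymm k := by
  have hne : s.powersetCard k ≠ 0 :=
    card_pos.1 (by rw [card_powersetCard]; exact Nat.choose_pos hk)
  simpa [esymm] using sum_lt_sum_of_nonempty (f := fun _ ↦ (0 : R)) (g := prod) hne
    fun t ht ↦ prod_pos fun x hx ↦ hs x (mem_of_le (mem_powersetCard.1 ht).1 hx)

end OrderedSemiring

section Field

variable {R : Type*} [Field R]

noncomputable def esymmMean (s : Multiset R) (k : ℕ) : R :=
  s.esymm k / (card s).choose k

@[simp]
theorem esymmMean_zero (s : Multiset R) : s.esymmMean 0 = 1 := by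
  simp [esymmMean, esymm]

theorem esymmMean_eq_zero_of_card_lt {s : Multiset R} {k : ℕ} (h : card s < k) :
    s.esymmMean k = 0 := by
  rw [esymmMean, esymm_eq_zero_of_card_lt h, zero_div]

theorem card_add_one_mul_esymmMean_cons [CharZero R] (a : R) (s : Multiset R) (k : ℕ) :
    (card s + 1) * (a ::ₘ s).esymmMean k =
      (card s + 1 - k) * s.esymmMean k + k * a * s.esymmMean (k - 1) := by
  obtain _ | k := k
  · simp
  set n := card s with hn
  simp only [esymmMean, esymm_cons_succ, card_cons, Nat.add_sub_cancel, Nat.cast_add,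
    Nat.cast_one, ← hn]
  rcases lt_trichotomy k n with hk | rfl | hk
  · have hC : ((n + 1).choose (k + 1) : R) ≠ 0 := by simp [Nat.choose_eq_zero_iff]; omega
    have hC₁ : (n.choose (k + 1) : R) ≠ 0 := by simp [Nat.choose_eq_zero_iff]; omega
    have hC₀ : (n.choose k : R) ≠ 0 := by simp [Nat.choose_eq_zero_iff]; omega
    have h₁ : ((n + 1 : ℕ) : R) * n.choose k = (n + 1).choose (k + 1) * (k + 1 : ℕ) := by
      exact_mod_cast Nat.add_one_mul_choose_eq n k
    have h₂ : (n.choose (k + 1) : R) * (n + 1 : ℕ) = (n + 1).choose (k + 1) * (n - k : ℕ) := by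
      have h := Nat.choose_mul_succ_eq n (k + 1)
      rw [Nat.add_sub_add_right] at h
      exact_mod_cast h
    push_cast [hk.le] at h₁ h₂
    field_simp
    linear_combination (s.esymm (k + 1) * n.choose k) * h₂ +
      (a * s.esymm k * n.choose (k + 1)) * h₁
  · simp [esymm_eq_zero_of_card_lt (Nat.lt_succ_self _), hn, mul_assoc]
  · simp [esymm_eq_zero_of_card_lt (show n < k + 1 by omega), esymm_eq_zero_of_card_lt hk]

end Field

section OrderedField

variable {R : Type*} [Field R] [LinearOrder R] [IsStrictOrderedRing R]

theorem esymmMean_nonneg {s : Multiset R} (hs : ∀ x ∈ s, 0 ≤ x) (k : ℕ) : 0 ≤ s.esymmMean k :=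
  div_nonneg (esymm_nonneg hs k) (Nat.cast_nonneg _)

theorem esymmMean_pos {s : Multiset R} (hs : ∀ x ∈ s, 0 < x) {k : ℕ} (hk : k ≤ card s) :
    0 < s.esymmMean k :=
  div_pos (esymm_pos hs hk) (Nat.cast_pos.2 (Nat.choose_pos hk))

theorem esymmMean_mul_le_sq {s : Multiset R} (hs : ∀ x ∈ s, 0 < x) (j : ℕ) :
    s.esymmMean j * s.esymmMean (j + 2) ≤ s.esymmMean (j + 1) ^ 2 := by
  induction s using Multiset.induction_on generalizing j with
  | empty => rw [esymmMean_eq_zero_of_card_lt (k := j + 2) (by simp), mul_zero]; positivity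
  | cons a s ih =>
    have ha : 0 < a := hs a (mem_cons_self a s)
    have hs' : ∀ x ∈ s, 0 < x := fun x hx ↦ hs x (mem_cons_of_mem hx)
    by_cases hj : card s < j + 1
    · rw [esymmMean_eq_zero_of_card_lt (k := j + 2) (by simp; omega), mul_zero]
      positivity
    set n := card s with hn
    have hN : (0 : R) < n + 1 := by positivity
    have hstep := newton_inequality_step (a := s.esymmMean (j - 1)) (t := a) (i := j) (l := n - j - 1)
      (esymmMean_pos hs' (by omega : j ≤ n)) (esymmMean_pos hs' (by omega : j + 1 ≤ n))
      (esymmMean_nonneg (fun x hx ↦ (hs' x hx).le) (j + 2)) ha.le (Nat.cast_nonneg j)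
      (by rw [sub_sub, sub_nonneg]; exact_mod_cast (by omega : j + 1 ≤ n))
      (fun hj ↦ by
        obtain ⟨i, rfl⟩ := Nat.exists_eq_add_one_of_ne_zero (by exact_mod_cast hj.ne')
        simpa using ih hs' i)
      (ih hs' j)
    have e₀ := card_add_one_mul_esymmMean_cons a s j
    have e₁ := card_add_one_mul_esymmMean_cons a s (j + 1)
    have e₂ := card_add_one_mul_esymmMean_cons a s (j + 2)
    rw [← hn] at e₀ e₁ e₂
    push_cast at e₀ e₁ e₂
    refine le_of_mul_le_mul_left ?_ (pow_pos hN 2)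
    calc (n + 1 : R) ^ 2 * ((a ::ₘ s).esymmMean j * (a ::ₘ s).esymmMean (j + 2))
        = ((n + 1) * (a ::ₘ s).esymmMean j) * ((n + 1) * (a ::ₘ s).esymmMean (j + 2)) := by ring
      _ ≤ ((n + 1) * (a ::ₘ s).esymmMean (j + 1)) ^ 2 := by
        rw [e₀, e₁, e₂]
        linear_combination hstep
      _ = (n + 1 : R) ^ 2 * (a ::ₘ s).esymmMean (j + 1) ^ 2 := by ring

end OrderedField

end Multiset

section SummationByParts

variable {R : Type*} [CommRing R]

-- `k - 2` is truncated subtraction: the `k = 1` term is `q 1 - q 0`.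
theorem sum_Icc_secondDiff (q : ℕ → R) (m : ℕ) :
    ∑ k ∈ Icc 1 m, (q k - 2 * q (k - 1) + q (k - 2)) = q m - q (m - 1) := by
  induction m with
  | zero => simp
  | succ m ih =>
    rw [sum_Icc_succ_top (by omega), ih, show m + 1 - 2 = m - 1 by omega, Nat.add_sub_cancel]
    ring

theorem sum_Icc_mul_secondDiff {q : ℕ → R} (hq : q 0 = 0) (j : ℕ) :
    ∑ k ∈ Icc 1 j, ((j : R) - k + 1) * (q k - 2 * q (k - 1) + q (k - 2)) = q j := by
  induction j with
  | zero => simp [hq]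
  | succ j ih =>
    calc ∑ k ∈ Icc 1 (j + 1), (((j + 1 : ℕ) : R) - k + 1) * (q k - 2 * q (k - 1) + q (k - 2))
        = ∑ k ∈ Icc 1 (j + 1), ((j : R) - k + 1) * (q k - 2 * q (k - 1) + q (k - 2)) +
            ∑ k ∈ Icc 1 (j + 1), (q k - 2 * q (k - 1) + q (k - 2)) := by
          rw [← sum_add_distrib]
          exact sum_congr rfl fun k _ ↦ by push_cast; ring
      _ = q (j + 1) := by
          rw [sum_Icc_succ_top (by omega), ih, sum_Icc_secondDiff, Nat.add_sub_cancel]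
          push_cast
          ring

theorem sum_Icc_mul_eq_sum_Icc_mul_secondDiff {q : ℕ → R} (hq : q 0 = 0) (w : ℕ → R) (ℓ : ℕ) :
    ∑ j ∈ Icc 1 ℓ, w j * q j =
      ∑ k ∈ Icc 1 ℓ, (∑ i ∈ Icc k ℓ, ((i : R) - k + 1) * w i) *
        (q k - 2 * q (k - 1) + q (k - 2)) := by
  have htaylor : ∀ j, w j * q j =
      ∑ k ∈ Icc 1 j, w j * (((j : R) - k + 1) * (q k - 2 * q (k - 1) + q (k - 2))) := fun j ↦ by
    rw [← mul_sum, sum_Icc_mul_secondDiff hq]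
  simp_rw [htaylor, sum_mul]
  rw [sum_comm' (t' := Icc 1 ℓ) (s' := fun k ↦ Icc k ℓ)]
  · exact sum_congr rfl fun _ _ ↦ sum_congr rfl fun _ _ ↦ by ring
  · intro j k
    simp only [mem_Icc]
    omega

variable [LinearOrder R] [IsStrictOrderedRing R]

theorem sum_mul_le_sum_mul_of_concave {ℓ : ℕ} {q : ℕ → R} (hq0 : q 0 = 0)
    (hq : ∀ k, k + 2 ≤ ℓ → q k + q (k + 2) ≤ 2 * q (k + 1)) {α β : ℕ → R}
    (hsum : ∑ j ∈ Icc 1 ℓ, (j : R) * α j = ∑ j ∈ Icc 1 ℓ, (j : R) * β j)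
    (hmaj : ∀ j, 2 ≤ j → j ≤ ℓ →
      ∑ i ∈ Icc j ℓ, ((i : R) - j + 1) * β i ≤ ∑ i ∈ Icc j ℓ, ((i : R) - j + 1) * α i) :
    ∑ j ∈ Icc 1 ℓ, α j * q j ≤ ∑ j ∈ Icc 1 ℓ, β j * q j := by
  rw [← sub_nonpos, ← sum_sub_distrib]
  simp_rw [← sub_mul]
  rw [sum_Icc_mul_eq_sum_Icc_mul_secondDiff hq0]
  refine sum_nonpos fun k hk ↦ ?_
  obtain ⟨hk1, hkℓ⟩ := mem_Icc.1 hk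
  simp_rw [mul_sub, sum_sub_distrib]
  rcases hk1.eq_or_lt with rfl | hk2
  · simp [hsum]
  · obtain ⟨m, rfl⟩ := Nat.exists_eq_add_of_le hk2
    refine mul_nonpos_of_nonneg_of_nonpos (sub_nonneg.2 (hmaj _ hk2 hkℓ)) ?_
    have := hq m (by omega)
    rw [show 1 + 1 + m - 1 = m + 1 by omega, show 1 + 1 + m - 2 = m by omega,
      show 1 + 1 + m = m + 2 by omega]
    linarith

end SummationByParts

theorem statement17_general (ℓ : ℕ) (x : Fin ℓ → ℝ) (hx : ∀ i, 0 < x i)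
    (p : ℕ → ℝ)
    (hp : ∀ j, p j =
      (∑ t ∈ (Finset.univ : Finset (Fin ℓ)).powersetCard j, ∏ i ∈ t, x i) /
        (Nat.choose ℓ j : ℝ))
    (α β : ℕ → ℝ)
    (hsum : ∑ j ∈ Finset.Icc 1 ℓ, (j : ℝ) * α j = ∑ j ∈ Finset.Icc 1 ℓ, (j : ℝ) * β j)
    (hmaj : ∀ j, 2 ≤ j → j ≤ ℓ →
      ∑ i ∈ Finset.Icc j ℓ, ((i : ℝ) - (j : ℝ) + 1) * α i ≥
        ∑ i ∈ Finset.Icc j ℓ, ((i : ℝ) - (j : ℝ) + 1) * β i) :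
    ∏ j ∈ Finset.Icc 1 ℓ, p j ^ α j ≤ ∏ j ∈ Finset.Icc 1 ℓ, p j ^ β j := by
  set s : Multiset ℝ := univ.val.map x
  have hs : ∀ y ∈ s, 0 < y := by simp [s, hx]
  have hcard : Multiset.card s = ℓ := by simp [s]
  have hps : ∀ j, p j = s.esymmMean j := fun j ↦ by
    rw [hp, Multiset.esymmMean, Finset.esymm_map_val, hcard]
  have hpos : ∀ j ≤ ℓ, 0 < p j := fun j hj ↦ hps j ▸ s.esymmMean_pos hs (hcard ▸ hj)
  have hpow : ∀ γ : ℕ → ℝ, ∀ j ∈ Icc 1 ℓ, 0 < p j ^ γ j := fun γ j hj ↦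
    rpow_pos_of_pos (hpos j (mem_Icc.1 hj).2) _
  have hlog : ∀ γ : ℕ → ℝ, log (∏ j ∈ Icc 1 ℓ, p j ^ γ j) = ∑ j ∈ Icc 1 ℓ, γ j * log (p j) :=
    fun γ ↦ by
      rw [log_prod fun j hj ↦ (hpow γ j hj).ne']
      exact sum_congr rfl fun j hj ↦ log_rpow (hpos j (mem_Icc.1 hj).2) _
  rw [← log_le_log_iff (prod_pos (hpow α)) (prod_pos (hpow β)), hlog, hlog]
  refine sum_mul_le_sum_mul_of_concave (by simp [hps]) (fun k hk ↦ ?_) hsum hmaj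
  have hnewton := log_le_log (mul_pos (hpos k (by omega)) (hpos (k + 2) hk))
    (show p k * p (k + 2) ≤ p (k + 1) ^ 2 by simpa only [hps] using s.esymmMean_mul_le_sq hs k)
  rw [log_mul (hpos k (by omega)).ne' (hpos (k + 2) hk).ne', log_pow] at hnewton
  exact_mod_cast hnewton

/-- Let `ℓ ≥ 1` and let `p j = e_j(x_1, …, x_ℓ)/C(ℓ,j)` be the
normalized elementary symmetric means of positive reals `x_1, …, x_ℓ`.  If
`α_1, …, α_ℓ` and `β_1, …, β_ℓ` are positive reals with `Σ_j j·α_j = Σ_j j·β_j`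
and `Σ_{i=j}^{ℓ} (i-j+1)·α_i ≥ Σ_{i=j}^{ℓ} (i-j+1)·β_i` for all `2 ≤ j ≤ ℓ`,
then `Π_{j=1}^{ℓ} p_j^{α_j} ≤ Π_{j=1}^{ℓ} p_j^{β_j}`. -/
theorem statement17 (ℓ : ℕ) (hℓ : 1 ≤ ℓ) (x : Fin ℓ → ℝ) (hx : ∀ i, 0 < x i)
    (p : ℕ → ℝ)
    (hp : ∀ j, p j =
      (∑ t ∈ (Finset.univ : Finset (Fin ℓ)).powersetCard j, ∏ i ∈ t, x i) /
        (Nat.choose ℓ j : ℝ))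
    (α β : ℕ → ℝ)
    (hα : ∀ j ∈ Finset.Icc 1 ℓ, 0 < α j) (hβ : ∀ j ∈ Finset.Icc 1 ℓ, 0 < β j)
    (hsum : ∑ j ∈ Finset.Icc 1 ℓ, (j : ℝ) * α j = ∑ j ∈ Finset.Icc 1 ℓ, (j : ℝ) * β j)
    (hmaj : ∀ j, 2 ≤ j → j ≤ ℓ →
      ∑ i ∈ Finset.Icc j ℓ, ((i : ℝ) - (j : ℝ) + 1) * α i ≥
        ∑ i ∈ Finset.Icc j ℓ, ((i : ℝ) - (j : ℝ) + 1) * β i) :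
    ∏ j ∈ Finset.Icc 1 ℓ, p j ^ α j ≤ ∏ j ∈ Finset.Icc 1 ℓ, p j ^ β j :=
  statement17_general ℓ x hx p hp α β hsum hmaj
end
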